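/- arXiv:1401.6136 — 4 statements merged into one kernel-verified Lean document; each statement's English description precedes it below -/
import Mathlib

section
/- Under the assumption Σ_{x|yz} ≺ D ⪯ Σ_{x|z} (all symmetric positive definite), the rate-distortion lower bound (1/2) Σᵢ log((λ₍ᵢ₎/λ'₍ᵢ₎)⁺) equals the closed form (1/2) log(|Σ_{x|z} − Σ_{x|yz}| / |D − Σ_{x|yz}|), where λ₍ᵢ₎, λ'₍ᵢ₎ are the sorted joint diagonal entries of Σ_{x|z} − Σ_{x|yz} and D − Σ_{x|yz} under simultaneous diagonalization. -/
/-!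
Congruence by the invertible `V` preserves (semi)definiteness, so the joint diagonal entries
satisfy `0 < λ'ᵢ ≤ λᵢ`. Sorting both sequences decreasingly keeps this termwise domination
(the `k`-th largest value is monotone in the data), so every ratio `λ₍ᵢ₎ / λ'₍ᵢ₎` is at least `1`
and the truncation `(·)⁺` is inactive. The sum of logarithms is then `log (∏ λᵢ / ∏ λ'ᵢ)`, and
the two products are `det V ^ 2` times the two determinants.
-/

open Matrix Finset

section Rearrangement

variable {α : Type*} [LinearOrder α] {n : ℕ}

lemma card_filter_comp_perm {ι : Type*} [Fintype ι] (p : ι → Prop) [DecidablePred p]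
    (σ : Equiv.Perm ι) :
    #{i | p (σ i)} = #{i | p i} :=
  card_equiv σ fun i => by simp

lemma Antitone.card_filter_le_of_lt {f : Fin n → α} (hf : Antitone f) {k : Fin n} {c : α}
    (hk : f k < c) : #{j | c ≤ f j} ≤ k := by
  calc #{j | c ≤ f j} ≤ #(Iio k) := card_le_card fun j hj => by
        simp only [mem_filter, mem_univ, true_and] at hj
        exact mem_Iio.mpr (lt_of_not_ge fun hkj => (hj.trans (hf hkj)).not_gt hk)
    _ = k := Fin.card_Iio k

lemma Antitone.lt_card_filter_le {f : Fin n → α} (hf : Antitone f) (k : Fin n) :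
    (k : ℕ) < #{j | f k ≤ f j} := by
  calc (k : ℕ) < #(Iic k) := by simp
    _ ≤ #{j | f k ≤ f j} := card_le_card fun j hj => by simpa using hf (mem_Iic.mp hj)

lemma antitone_comp_perm_le {a b : Fin n → α} (hab : ∀ i, b i ≤ a i) {σ τ : Equiv.Perm (Fin n)}
    (ha : Antitone (a ∘ σ)) (hb : Antitone (b ∘ τ)) (k : Fin n) : b (τ k) ≤ a (σ k) := by
  by_contra! hlt
  set c := b (τ k)
  have : (k : ℕ) < k :=
    calc (k : ℕ) < #{j | c ≤ b (τ j)} := hb.lt_card_filter_le k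
      _ = #{i | c ≤ b i} := card_filter_comp_perm (c ≤ b ·) τ
      _ ≤ #{i | c ≤ a i} := card_le_card <| monotone_filter_right _ fun i _ h => h.trans (hab i)
      _ = #{j | c ≤ a (σ j)} := (card_filter_comp_perm (c ≤ a ·) σ).symm
      _ ≤ k := ha.card_filter_le_of_lt hlt
  exact this.false

end Rearrangement

namespace Matrix

variable {ι : Type*} [Fintype ι] [DecidableEq ι] {A V : Matrix ι ι ℝ} {d : ι → ℝ}

lemma PosDef.diagonal_pos_of_congr (hA : A.PosDef) (hV : IsUnit V)
    (h : V * A * Vᵀ = diagonal d) (i : ι) : 0 < d i := by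
  rw [← conjTranspose_eq_transpose_of_trivial, ← star_eq_conjTranspose] at h
  exact posDef_diagonal_iff.mp (h ▸ (IsUnit.posDef_star_right_conjugate_iff hV).mpr hA) i

lemma PosSemidef.diagonal_nonneg_of_congr (hA : A.PosSemidef) (h : V * A * Vᵀ = diagonal d)
    (i : ι) : 0 ≤ d i := by
  rw [← conjTranspose_eq_transpose_of_trivial] at h
  exact posSemidef_diagonal_iff.mp (h ▸ hA.mul_mul_conjTranspose_same V) i

lemma prod_eq_det_sq_mul_det_of_congr (h : V * A * Vᵀ = diagonal d) :
    ∏ i, d i = V.det ^ 2 * A.det := by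
  rw [← det_diagonal, ← h, det_mul, det_mul, det_transpose]
  ring

end Matrix

lemma sum_log_div_comp_perm {ι : Type*} [Fintype ι] {a b : ι → ℝ} (ha : ∀ i, 0 < a i)
    (hb : ∀ i, 0 < b i) (σ τ : Equiv.Perm ι) :
    ∑ i, Real.log (a (σ i) / b (τ i)) = Real.log ((∏ i, a i) / ∏ i, b i) := by
  simp_rw [Real.log_div (ha _).ne' (hb _).ne', sum_sub_distrib,
    Equiv.sum_comp σ fun i => Real.log (a i), Equiv.sum_comp τ fun i => Real.log (b i)]
  rw [Real.log_div (prod_pos fun i _ => ha i).ne' (prod_pos fun i _ => hb i).ne',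
    Real.log_prod fun i _ => (ha i).ne', Real.log_prod fun i _ => (hb i).ne']

theorem lower_bound_closed_form_general
    {n : ℕ} (Sxyz D Sxz V : Matrix (Fin n) (Fin n) ℝ)
    (h1 : (D - Sxyz).PosDef)
    (h2 : (Sxz - D).PosSemidef)
    (h3 : (Sxz - Sxyz).PosDef)
    (hV : IsUnit V)
    (lam lam' : Fin n → ℝ)
    (hVlam : V * (Sxz - Sxyz) * Vᵀ = Matrix.diagonal lam)
    (hVlam' : V * (D - Sxyz) * Vᵀ = Matrix.diagonal lam')
    (lams lams' : Fin n → ℝ)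
    (hlams_sorted : Antitone lams) (hlams'_sorted : Antitone lams')
    (hlams : ∃ σ : Equiv.Perm (Fin n), lams = lam ∘ σ)
    (hlams' : ∃ σ : Equiv.Perm (Fin n), lams' = lam' ∘ σ) :
    (1/2 : ℝ) * ∑ i, Real.log (max (lams i / lams' i) 1) =
      (1/2 : ℝ) * Real.log ((Sxz - Sxyz).det / (D - Sxyz).det) := by
  obtain ⟨σ, rfl⟩ := hlams
  obtain ⟨τ, rfl⟩ := hlams'
  have hlam := h3.diagonal_pos_of_congr hV hVlam
  have hlam' := h1.diagonal_pos_of_congr hV hVlam'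
  have hle (i : Fin n) : lam' i ≤ lam i := by
    have hdiff : V * (Sxz - D) * Vᵀ = diagonal (lam - lam') := by
      rw [Pi.sub_def, ← diagonal_sub, ← hVlam, ← hVlam']
      noncomm_ring
    exact sub_nonneg.mp (h2.diagonal_nonneg_of_congr hdiff i)
  have hratio (i : Fin n) : max (lam (σ i) / lam' (τ i)) 1 = lam (σ i) / lam' (τ i) :=
    max_eq_left <| (one_le_div (hlam' _)).mpr <|
      antitone_comp_perm_le hle hlams_sorted hlams'_sorted i
  simp_rw [Function.comp_apply, hratio, sum_log_div_comp_perm hlam hlam',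
    prod_eq_det_sq_mul_det_of_congr hVlam, prod_eq_det_sq_mul_det_of_congr hVlam',
    mul_div_mul_left _ _ (pow_ne_zero 2 (isUnit_iff_isUnit_det V |>.mp hV).ne_zero)]

/-- **Corollary 1.** Under `Sxyz ≺ D ⪯ Sxz`, the lower bound
`(1/2) ∑ log ((lams i / lams' i)⁺)` (with `(x)⁺ := max x 1` and `lams`, `lams'`
the decreasingly sorted joint diagonal entries of `Sxz - Sxyz` and `D - Sxyz`)
equals the closed form `(1/2) log (det (Sxz - Sxyz) / det (D - Sxyz))`. -/
theorem lower_bound_closed_form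
    {n : ℕ} (Sxyz D Sxz V : Matrix (Fin n) (Fin n) ℝ)
    (hSxyz : Sxyz.PosDef) (hD : D.PosDef) (hSxz : Sxz.PosDef)
    (h1 : (D - Sxyz).PosDef)
    (h2 : (Sxz - D).PosSemidef)
    (h3 : (Sxz - Sxyz).PosDef)
    (hV : IsUnit V)
    (lam lam' : Fin n → ℝ)
    (hVlam : V * (Sxz - Sxyz) * Vᵀ = Matrix.diagonal lam)
    (hVlam' : V * (D - Sxyz) * Vᵀ = Matrix.diagonal lam')
    (lams lams' : Fin n → ℝ)
    (hlams_sorted : Antitone lams) (hlams'_sorted : Antitone lams')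
    (hlams : ∃ σ : Equiv.Perm (Fin n), lams = lam ∘ σ)
    (hlams' : ∃ σ : Equiv.Perm (Fin n), lams' = lam' ∘ σ) :
    (1/2 : ℝ) * ∑ i, Real.log (max (lams i / lams' i) 1) =
      (1/2 : ℝ) * Real.log ((Sxz - Sxyz).det / (D - Sxyz).det) :=
  lower_bound_closed_form_general Sxyz D Sxz V h1 h2 h3 hV lam lam' hVlam hVlam' lams lams'
    hlams_sorted hlams'_sorted hlams hlams'
end

section
/- Fix positive reals λ₁,...,λ_n and a budget B with 0 < B ≤ Σᵢ λᵢ. The minimum of Σᵢ (1/2) log(λᵢ/dᵢ) over all (d₁,...,dₙ) with 0 < dᵢ ≤ λᵢ and Σᵢ dᵢ = B is attained at dᵢ = min(λ, λᵢ) where λ solves Σᵢ min(λ, λᵢ) = B, and the minimum value is (1/2) Σᵢ log((λᵢ/λ)⁺). -/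
/-- **Reverse water-filling optimality.** For positive `lam i` and budget
`0 < B ≤ ∑ lam i`, with water level `lev > 0` solving `∑ min lev (lam i) = B`,
the choice `d i = min lev (lam i)` is feasible and minimizes
`∑ (1/2) log (lam i / d i)` over feasible `d`, with minimum value
`(1/2) ∑ log ((lam i / lev)⁺)` where `(x)⁺ := max x 1`. -/
theorem reverse_waterfilling_optimal
    {n : ℕ} (lam : Fin n → ℝ) (hlam : ∀ i, 0 < lam i)
    (B : ℝ) (hB0 : 0 < B) (hB1 : B ≤ ∑ i, lam i)
    (lev : ℝ) (hlev : 0 < lev)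
    (hlev_eq : ∑ i, min lev (lam i) = B) :
    ((∀ i, 0 < min lev (lam i) ∧ min lev (lam i) ≤ lam i) ∧
      ∑ i, min lev (lam i) = B) ∧
    (∑ i, (1/2 : ℝ) * Real.log (lam i / min lev (lam i)) =
      (1/2 : ℝ) * ∑ i, Real.log (max (lam i / lev) 1)) ∧
    (∀ d : Fin n → ℝ, (∀ i, 0 < d i ∧ d i ≤ lam i) → ∑ i, d i = B →
      (1/2 : ℝ) * ∑ i, Real.log (max (lam i / lev) 1) ≤
        ∑ i, (1/2 : ℝ) * Real.log (lam i / d i)) := by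
  have hm : ∀ i, 0 < min lev (lam i) := fun i => lt_min hlev (hlam i)
  have hterm : ∀ i, Real.log (lam i / min lev (lam i)) =
      Real.log (max (lam i / lev) 1) := by
    intro i
    rcases le_total lev (lam i) with h | h
    · rw [min_eq_left h, max_eq_left]
      exact (le_div_iff₀ hlev).mpr (by linarith)
    · rw [min_eq_right h, div_self (hlam i).ne', max_eq_right, Real.log_one]
      exact div_le_one_of_le₀ h hlev.le
  have heq : ∑ i, (1/2 : ℝ) * Real.log (lam i / min lev (lam i)) =
      (1/2 : ℝ) * ∑ i, Real.log (max (lam i / lev) 1) := by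
    rw [Finset.mul_sum]
    exact Finset.sum_congr rfl fun i _ => by rw [hterm i]
  refine ⟨⟨fun i => ⟨hm i, min_le_right _ _⟩, hlev_eq⟩, heq, ?_⟩
  intro d hd hsum
  rw [← heq]
  have key : ∀ i, Real.log (d i) - Real.log (min lev (lam i)) ≤
      (d i - min lev (lam i)) / lev := by
    intro i
    obtain ⟨hd0, hdl⟩ := hd i
    have h1 : Real.log (d i) - Real.log (min lev (lam i)) ≤
        (d i - min lev (lam i)) / min lev (lam i) := by
      have h2 := Real.log_le_sub_one_of_pos (div_pos hd0 (hm i))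
      rw [Real.log_div hd0.ne' (hm i).ne'] at h2
      have h3 : d i / min lev (lam i) - 1 =
          (d i - min lev (lam i)) / min lev (lam i) := by
        rw [sub_div, div_self (hm i).ne']
      linarith
    rcases le_total lev (lam i) with h | h
    · rwa [min_eq_left h] at h1 ⊢
    · rw [min_eq_right h] at h1 ⊢
      have hml : lam i ≤ lev := h
      have hneg : d i - lam i ≤ 0 := by linarith
      have : (d i - lam i) / lam i ≤ (d i - lam i) / lev := by
        rw [div_le_div_iff₀ (hlam i) hlev]
        nlinarith
      linarith
  have hsum2 : ∑ i, (Real.log (d i) - Real.log (min lev (lam i))) ≤ 0 := by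
    calc ∑ i, (Real.log (d i) - Real.log (min lev (lam i)))
        ≤ ∑ i, (d i - min lev (lam i)) / lev :=
          Finset.sum_le_sum fun i _ => key i
      _ = (∑ i, (d i - min lev (lam i))) / lev := by rw [Finset.sum_div]
      _ = 0 := by rw [Finset.sum_sub_distrib, hsum, hlev_eq, sub_self, zero_div]
  have hpt : ∀ i, (1/2 : ℝ) * Real.log (lam i / min lev (lam i)) -
      (1/2 : ℝ) * Real.log (lam i / d i) =
      (1/2 : ℝ) * (Real.log (d i) - Real.log (min lev (lam i))) := by
    intro i
    rw [Real.log_div (hlam i).ne' (hm i).ne', Real.log_div (hlam i).ne' (hd i).1.ne']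
    ring
  have hfin : ∑ i, (1/2 : ℝ) * Real.log (lam i / min lev (lam i)) -
      ∑ i, (1/2 : ℝ) * Real.log (lam i / d i) ≤ 0 := by
    rw [← Finset.sum_sub_distrib]
    calc ∑ i, ((1/2 : ℝ) * Real.log (lam i / min lev (lam i)) -
          (1/2 : ℝ) * Real.log (lam i / d i))
        = (1/2 : ℝ) * ∑ i, (Real.log (d i) - Real.log (min lev (lam i))) := by
          rw [Finset.mul_sum]; exact Finset.sum_congr rfl fun i _ => hpt i
      _ ≤ 0 := by linarith
  linarith
end

section
/- Let Λ = diag(λᵢ) ≻ 0 and let Σ_ν = U V^{-1} diag(λᵢ min(λᵢ,λ'ᵢ)/(λᵢ − min(λᵢ,λ'ᵢ))) V^{-T} Uᵀ where U is orthogonal, V nonsingular with U V^{-1} Λ V^{-T} Uᵀ = Λ, and λ'ᵢ < λᵢ for all i. Then (1/2) log(det(Λ + Σ_ν)/det(Σ_ν)) = (1/2) Σᵢ log(λᵢ/λ'ᵢ). -/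
open Matrix

/-! Writing `M = U V⁻¹`, both `Σ_ν` and `Λ + Σ_ν = M (Λ + D) Mᵀ` (by `M Λ Mᵀ = Λ`) are congruences
of diagonal matrices by the same `M`, so `det (Λ + Σ_ν) / det Σ_ν = ∏ (λᵢ + dᵢ) / dᵢ`, and with
`dᵢ = λᵢ λ'ᵢ / (λᵢ - λ'ᵢ)` each factor is `λᵢ / λ'ᵢ`. Taking determinants in `M Λ Mᵀ = Λ` gives
`det M ^ 2 = 1`, which is all that is needed of `M`. -/

namespace Matrix

variable {ι K : Type*} [Fintype ι] [DecidableEq ι]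

theorem det_mul_diagonal_mul_transpose [CommRing K] (M : Matrix ι ι K) (e : ι → K) :
    (M * diagonal e * Mᵀ).det = M.det ^ 2 * ∏ i, e i := by
  rw [det_mul, det_mul, det_diagonal, det_transpose]
  ring

theorem det_sq_eq_one_of_mul_diagonal_mul_transpose_eq [CommRing K] [IsDomain K]
    {M : Matrix ι ι K} {e : ι → K} (he : ∏ i, e i ≠ 0) (hM : M * diagonal e * Mᵀ = diagonal e) :
    M.det ^ 2 = 1 := by
  have h := congrArg det hM
  rw [det_mul_diagonal_mul_transpose, det_diagonal] at h
  exact mul_right_cancel₀ he (h.trans (one_mul _).symm)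

theorem det_mul_diagonal_mul_transpose_div [Field K] {M : Matrix ι ι K} (hM : M.det ≠ 0)
    (a b : ι → K) :
    (M * diagonal a * Mᵀ).det / (M * diagonal b * Mᵀ).det = ∏ i, a i / b i := by
  rw [det_mul_diagonal_mul_transpose, det_mul_diagonal_mul_transpose,
    mul_div_mul_left _ _ (pow_ne_zero 2 hM), Finset.prod_div_distrib]

end Matrix

theorem add_mul_div_sub_div_mul_div_sub {K : Type*} [Field K] {a b : K} (ha : a ≠ 0)
    (hb : b ≠ 0) (hab : a ≠ b) :
    (a + a * b / (a - b)) / (a * b / (a - b)) = a / b := by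
  have := sub_ne_zero.mpr hab
  field_simp
  ring

theorem coding_noise_rate_identity_general
    {n : ℕ} (U V : Matrix (Fin n) (Fin n) ℝ)
    (lam lam' : Fin n → ℝ)
    (hlam' : ∀ i, 0 < lam' i) (hlt : ∀ i, lam' i < lam i)
    (hfix : U * V⁻¹ * Matrix.diagonal lam * (V⁻¹)ᵀ * Uᵀ = Matrix.diagonal lam) :
    (1/2 : ℝ) * Real.log
        ((Matrix.diagonal lam +
            U * V⁻¹ *
              Matrix.diagonal (fun i =>
                lam i * min (lam i) (lam' i) / (lam i - min (lam i) (lam' i))) *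
              (V⁻¹)ᵀ * Uᵀ).det /
          (U * V⁻¹ *
              Matrix.diagonal (fun i =>
                lam i * min (lam i) (lam' i) / (lam i - min (lam i) (lam' i))) *
              (V⁻¹)ᵀ * Uᵀ).det) =
      (1/2 : ℝ) * ∑ i, Real.log (lam i / lam' i) := by
  have hlam : ∀ i, 0 < lam i := fun i => (hlam' i).trans (hlt i)
  set M := U * V⁻¹
  set d : Fin n → ℝ := fun i => lam i * lam' i / (lam i - lam' i)
  have hcongr : ∀ D, M * D * (V⁻¹)ᵀ * Uᵀ = M * D * Mᵀ := fun D => by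
    simp only [M, transpose_mul, Matrix.mul_assoc]
  have hmin : ∀ i, min (lam i) (lam' i) = lam' i := fun i => min_eq_right (hlt i).le
  simp only [hmin, hcongr] at hfix ⊢
  have hdetM : M.det ≠ 0 := fun h => by
    simpa [h] using det_sq_eq_one_of_mul_diagonal_mul_transpose_eq
      (Finset.prod_ne_zero_iff.mpr fun i _ => (hlam i).ne') hfix
  have hsum : diagonal lam + M * diagonal d * Mᵀ = M * diagonal (lam + d) * Mᵀ := by
    rw [show diagonal (lam + d) = diagonal lam + diagonal d from (diagonal_add lam d).symm,
      Matrix.mul_add, Matrix.add_mul, hfix]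
  have hratio : ∀ i, (lam + d) i / d i = lam i / lam' i := fun i =>
    add_mul_div_sub_div_mul_div_sub (hlam i).ne' (hlam' i).ne' (hlt i).ne'
  rw [hsum, det_mul_diagonal_mul_transpose_div hdetM, Finset.prod_congr rfl fun i _ => hratio i,
    Real.log_prod fun i _ => (div_pos (hlam i) (hlam' i)).ne']

/-- With `Λ = diagonal lam ≻ 0`, `U` orthogonal, `V` nonsingular with
`U V⁻¹ Λ V⁻ᵀ Uᵀ = Λ`, and coding-noise covariance
`Sν = U V⁻¹ diag (lam i * lam' i / (lam i - lam' i)) V⁻ᵀ Uᵀ` (for `lam' i < lam i`),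
one has `(1/2) log (det (Λ + Sν) / det Sν) = (1/2) ∑ log (lam i / lam' i)`. -/
theorem coding_noise_rate_identity
    {n : ℕ} (U V : Matrix (Fin n) (Fin n) ℝ)
    (lam lam' : Fin n → ℝ)
    (hlam' : ∀ i, 0 < lam' i) (hlt : ∀ i, lam' i < lam i)
    (hU : U * Uᵀ = 1) (hU' : Uᵀ * U = 1)
    (hV : IsUnit V)
    (hfix : U * V⁻¹ * Matrix.diagonal lam * (V⁻¹)ᵀ * Uᵀ = Matrix.diagonal lam) :
    (1/2 : ℝ) * Real.log
        ((Matrix.diagonal lam +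
            U * V⁻¹ *
              Matrix.diagonal (fun i =>
                lam i * min (lam i) (lam' i) / (lam i - min (lam i) (lam' i))) *
              (V⁻¹)ᵀ * Uᵀ).det /
          (U * V⁻¹ *
              Matrix.diagonal (fun i =>
                lam i * min (lam i) (lam' i) / (lam i - min (lam i) (lam' i))) *
              (V⁻¹)ᵀ * Uᵀ).det) =
      (1/2 : ℝ) * ∑ i, Real.log (lam i / lam' i) :=
  coding_noise_rate_identity_general U V lam lam' hlam' hlt hfix
end

section
/- Let Σ_{x|z} ≻ Σ_{x|yz} ≻ 0 and Σ_{x|yz} ≺ D ⪯ Σ_{x|z}. Then (Σ_{x|z} − Σ_{x|yz})(Σ_{x|z} − D)^{-1}(D − Σ_{x|yz}) is well-defined whenever Σ_{x|z} − D is invertible, and the matrix Σ_ν := U (Σ_{x|z} − Σ_{x|yz})(Σ_{x|z} − D)^{-1}(D − Σ_{x|yz}) Uᵀ (U orthogonal) satisfies det(Λ + Σ_ν)/det(Σ_ν) = |Σ_{x|z} − Σ_{x|yz}| / |D − Σ_{x|yz}| where Λ = U(Σ_{x|z} − Σ_{x|yz})Uᵀ. -/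
open Matrix

/-- With `Sxyz ≺ D ≺ Sxz`, the matrix
`Sν := U (Sxz - Sxyz) (Sxz - D)⁻¹ (D - Sxyz) Uᵀ` (with `U` orthogonal
diagonalizing `Sxz - Sxyz`, i.e. `Λ := U (Sxz - Sxyz) Uᵀ` diagonal) satisfies
`det (Λ + Sν) / det Sν = det (Sxz - Sxyz) / det (D - Sxyz)`. -/
theorem det_ratio_of_noise_covariance
    {n : ℕ} (Sxyz D Sxz U : Matrix (Fin n) (Fin n) ℝ)
    (hSxyz : Sxyz.PosDef) (hD : D.PosDef) (hSxz : Sxz.PosDef)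
    (h1 : (D - Sxyz).PosDef)
    (h2 : (Sxz - D).PosDef)
    (h3 : (Sxz - Sxyz).PosDef)
    (hU : U * Uᵀ = 1) (hU' : Uᵀ * U = 1)
    (hdiag : (U * (Sxz - Sxyz) * Uᵀ).IsDiag) :
    (U * (Sxz - Sxyz) * Uᵀ +
        U * ((Sxz - Sxyz) * (Sxz - D)⁻¹ * (D - Sxyz)) * Uᵀ).det /
      (U * ((Sxz - Sxyz) * (Sxz - D)⁻¹ * (D - Sxyz)) * Uᵀ).det =
      (Sxz - Sxyz).det / (D - Sxyz).det := by
  set A := Sxz - Sxyz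
  set B := Sxz - D
  set C := D - Sxyz
  have hBC : B + C = A := by simp [A, B, C]
  have hAdet : A.det ≠ 0 := ne_of_gt h3.det_pos
  have hCdet : C.det ≠ 0 := ne_of_gt h1.det_pos
  have hBdet : B.det ≠ 0 := ne_of_gt h2.det_pos
  have hBinv : IsUnit B.det := isUnit_iff_ne_zero.mpr hBdet
  have hdetU : U.det * Uᵀ.det = 1 := by
    rw [← det_mul, hU, det_one]
  have hconj : ∀ X : Matrix (Fin n) (Fin n) ℝ, (U * X * Uᵀ).det = X.det := by
    intro X
    rw [det_mul, det_mul]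
    ring_nf
    rw [mul_comm, ← mul_assoc, mul_comm Uᵀ.det U.det, hdetU, one_mul]
  have hnum : U * A * Uᵀ + U * (A * B⁻¹ * C) * Uᵀ = U * (A * B⁻¹ * A) * Uᵀ := by
    have hA : A * B⁻¹ * B = A := by
      rw [mul_assoc, Matrix.nonsing_inv_mul B hBinv, mul_one]
    have : A + A * B⁻¹ * C = A * B⁻¹ * A :=
      (calc A * B⁻¹ * A = A * B⁻¹ * (B + C) := by rw [hBC]
        _ = A * B⁻¹ * B + A * B⁻¹ * C := by rw [mul_add]
        _ = A + A * B⁻¹ * C := by rw [hA]).symm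
    calc U * A * Uᵀ + U * (A * B⁻¹ * C) * Uᵀ
        = U * (A + A * B⁻¹ * C) * Uᵀ := by noncomm_ring
      _ = U * (A * B⁻¹ * A) * Uᵀ := by rw [this]
  rw [hnum, hconj, hconj]
  rw [det_mul, det_mul, det_mul, det_mul]
  have hBinvdet : B⁻¹.det = B.det⁻¹ := by
    rw [det_nonsing_inv, Ring.inverse_eq_inv']
  rw [hBinvdet]
  field_simp
end
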